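/- Let S = S(k_0, k_1, …, k_m) be the LR-string R^{k_0} L^{k_1} R^{k_2} ⋯ ending in R^{k_m} if m is even and L^{k_m} if m is odd, with k_0 ≥ 0 and k_i ≥ 1 for 1 ≤ i ≤ m. Then N(S) = 2^{k_0+⋯+k_m+1} − 2^{k_1+⋯+k_m} + 2^{k_2+⋯+k_m} − ⋯ + 2^{k_m} − 2 if m is even, and N(S) = 2^{k_0+⋯+k_m+1} − 2^{k_1+⋯+k_m} + 2^{k_2+⋯+k_m} − ⋯ − 2^{k_m} − 1 if m is odd. -/

import Mathlib

open List

/-- `r`-value of an LR-string (`true` = R, `false` = L):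
`r(ε) = 1`, `r(SL) = r(S) - 2^(-|SL|)`, `r(SR) = r(S) + 2^(-|SR|)`. -/
def rval (S : List Bool) : ℚ :=
  1 + ∑ i ∈ Finset.range S.length,
      (if S.getD i false then ((2:ℚ)^(i+1))⁻¹ else -((2:ℚ)^(i+1))⁻¹)

/-- Generalized strings: LR-strings plus the formal symbols `R⁻¹ = inv true`
and `L⁻¹ = inv false`. -/
inductive Gen where
  | inv : Bool → Gen
  | str : List Bool → Gen
deriving DecidableEq

/-- Left parent: `P_L(ε) = R⁻¹`, `P_L(SL) = P_L(S)`, `P_L(SR) = S`. -/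
def PL (S : List Bool) : Gen :=
  match S.reverse.dropWhile (· = false) with
  | [] => Gen.inv true
  | _ :: t => Gen.str t.reverse

/-- Right parent: `P_R(ε) = L⁻¹`, `P_R(SL) = S`, `P_R(SR) = P_R(S)`. -/
def PR (S : List Bool) : Gen :=
  match S.reverse.dropWhile (· = true) with
  | [] => Gen.inv false
  | _ :: t => Gen.str t.reverse

/-- Extension of `r` to generalized strings: `r(R⁻¹) = 0`, `r(L⁻¹) = 2`. -/
def rg : Gen → ℚ
  | Gen.inv true => 0
  | Gen.inv false => 2
  | Gen.str S => rval S

/-- Length of a generalized string; the formal symbols have length `-1`. -/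
def glen : Gen → ℤ
  | Gen.inv _ => -1
  | Gen.str S => S.length

/-- Position function: `N(ε) = 0`, `N(SL) = 2N(S)+1`, `N(SR) = 2N(S)+2`. -/
def posN (S : List Bool) : ℕ :=
  ∑ i ∈ Finset.range S.length, (if S.getD i false then 2 else 1) * 2^(S.length - 1 - i)

/-- The alternating-block string `S(k₀,…,k_m) = R^{k₀} L^{k₁} R^{k₂} ⋯`. -/
def blockStr (ks : List ℕ) : List Bool :=
  (ks.zipIdx.map (fun p => List.replicate p.1 (decide (p.2 % 2 = 0)))).flatten

/-- Continued fraction `[q₀,…,q_m]`. -/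
def cf : List ℚ → ℚ
  | [] => 0
  | [q] => q
  | q :: qs => q + (cf qs)⁻¹

/-- Admissible continued-fraction index sequences: `[q₀]` with `q₀ ≥ 1`, or
`[q₀,…,q_m]` with `m ≥ 1`, intermediate `qᵢ ≥ 1`, and `q_m ≥ 2`. -/
def CFAdmissible (qs : List ℕ) : Prop :=
  qs ≠ [] ∧ (qs.length = 1 → 1 ≤ qs.getD 0 0) ∧
    (∀ i, 1 ≤ i → i + 1 < qs.length → 1 ≤ qs.getD i 0) ∧
    (2 ≤ qs.length → 2 ≤ qs.getLastD 0)

/-- The map `f([q₀,…,q_m]) = S(q₀,…,q_{m-1},q_m - 1)`. -/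
def cfToStr (qs : List ℕ) : List Bool :=
  blockStr (qs.dropLast ++ [qs.getLastD 0 - 1])

/-! Since `N` is a weighted digit sum with digits `L = 1`, `R = 2`, and `S(k₀,…,k_m)` is `R^{k₀}`
followed by the `L ↔ R` complement of `S(k₁,…,k_m)` (complementing turns each digit `d` into
`3 - d`), one gets the recursion
`N(S(k₀,…,k_m)) + N(S(k₁,…,k_m)) + 3 = 2^{k₀+⋯+k_m+1} + 2^{k₁+⋯+k_m}`,
whose solution with `N(ε) = 0` is the alternating closed formula. -/

lemma posN_append_singleton (S : List Bool) (b : Bool) :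
    posN (S ++ [b]) = 2 * posN S + if b then 2 else 1 := by
  have hS : ∀ i ∈ Finset.range S.length,
      (if (S ++ [b]).getD i false then 2 else 1) * 2 ^ (S.length + 1 - 1 - i)
        = 2 * ((if S.getD i false then 2 else 1) * 2 ^ (S.length - 1 - i)) := by
    intro i hi
    rw [Finset.mem_range] at hi
    rw [List.getD_append _ _ _ _ hi, show S.length + 1 - 1 - i = S.length - 1 - i + 1 by omega,
      pow_succ]
    ring
  simp only [posN, List.length_append, List.length_singleton]
  rw [Finset.sum_range_succ, Finset.sum_congr rfl hS, ← Finset.mul_sum,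
    List.getD_append_right _ _ _ _ le_rfl]
  simp

lemma posN_append (S T : List Bool) : posN (S ++ T) = 2 ^ T.length * posN S + posN T := by
  induction T using List.reverseRecOn with
  | nil => simp [posN]
  | append_singleton T b ih =>
    rw [← List.append_assoc, posN_append_singleton, posN_append_singleton, ih,
      List.length_append, List.length_singleton, pow_succ]
    ring

lemma posN_replicate_true (k : ℕ) : posN (List.replicate k true) + 2 = 2 ^ (k + 1) := by
  induction k with
  | zero => simp [posN]
  | succ k ih =>
    rw [List.replicate_succ', posN_append_singleton, pow_succ, ← ih, if_pos rfl]
    ring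

lemma posN_map_not_add_posN (S : List Bool) :
    posN (S.map not) + posN S + 3 = 3 * 2 ^ S.length := by
  induction S using List.reverseRecOn with
  | nil => simp [posN]
  | append_singleton S b ih =>
    rw [List.map_append, List.map_singleton, posN_append_singleton, posN_append_singleton,
      List.length_append, List.length_singleton, pow_succ]
    cases b <;> simp only [Bool.not_false, Bool.not_true, Bool.false_eq_true, ↓reduceIte] <;>
      linarith

lemma blockStr_cons (k : ℕ) (ks : List ℕ) :
    blockStr (k :: ks) = List.replicate k true ++ (blockStr ks).map not := by
  simp only [blockStr, List.zipIdx_cons, List.zipIdx_succ, List.map_cons, List.flatten_cons,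
    List.map_map, List.map_flatten]
  congr 2
  refine List.map_congr_left fun ⟨a, i⟩ _ => ?_
  rcases Nat.mod_two_eq_zero_or_one i with h | h <;>
    simp [List.map_replicate, Nat.succ_mod_two_eq_zero_iff, h]

lemma length_blockStr (ks : List ℕ) : (blockStr ks).length = ks.sum := by
  induction ks with
  | nil => rfl
  | cons k ks ih => simp [blockStr_cons, ih]

lemma posN_blockStr_cons (k : ℕ) (ks : List ℕ) :
    posN (blockStr (k :: ks)) + posN (blockStr ks) + 3 = 2 ^ (k + ks.sum + 1) + 2 ^ ks.sum := by
  have hR := posN_replicate_true k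
  have hL := posN_map_not_add_posN (blockStr ks)
  rw [length_blockStr] at hL
  rw [blockStr_cons, posN_append, List.length_map, length_blockStr]
  rw [show k + ks.sum + 1 = ks.sum + (k + 1) by ring, pow_add, ← hR]
  linarith

-- The truncation `[].length - 1 = 0` gives `alternatingTail [] = -2`, which is exactly the value
-- that makes `alternatingTail_cons` hold also for `ks = []`.
def alternatingTail (ks : List ℕ) : ℤ :=
  ∑ i ∈ Finset.Icc 1 (ks.length - 1), (-1 : ℤ) ^ i * 2 ^ (ks.drop i).sum -
    if Even (ks.length - 1) then 2 else 1

lemma alternatingTail_cons (k : ℕ) (ks : List ℕ) :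
    alternatingTail (k :: ks) = -2 ^ ks.sum - 3 - alternatingTail ks := by
  obtain rfl | ⟨m, hm⟩ : ks = [] ∨ ∃ m, ks.length = m + 1 := by
    cases ks <;> simp
  · simp [alternatingTail]
  have hsum : ∑ i ∈ Finset.Icc 1 (m + 1), (-1 : ℤ) ^ i * 2 ^ ((k :: ks).drop i).sum
      = -2 ^ ks.sum - ∑ i ∈ Finset.Icc 1 m, (-1 : ℤ) ^ i * 2 ^ (ks.drop i).sum := by
    rw [← Finset.insert_Icc_add_one_left_eq_Icc (by omega), Finset.sum_insert (by simp),
      ← Finset.map_add_right_Icc, Finset.sum_map, sub_eq_add_neg, ← Finset.sum_neg_distrib]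
    simp [pow_succ]
  have hparity : (if Even (m + 1) then (2 : ℤ) else 1) = 3 - if Even m then 2 else 1 := by
    by_cases h : Even m <;> simp [h, Nat.even_add_one]
  simp only [alternatingTail, List.length_cons, hm, Nat.add_sub_cancel, hsum, hparity]
  ring

theorem stmt10_general (ks : List ℕ) :
    (posN (blockStr ks) : ℤ) =
      2 ^ (ks.sum + 1) +
        (∑ i ∈ Finset.Icc 1 (ks.length - 1), (-1 : ℤ) ^ i * 2 ^ (ks.drop i).sum) -
        (if Even (ks.length - 1) then 2 else 1) := by
  rw [add_sub_assoc, ← alternatingTail]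
  induction ks with
  | nil => rfl
  | cons k ks ih =>
    have hrec := posN_blockStr_cons k ks
    zify at hrec
    rw [alternatingTail_cons, List.sum_cons]
    linear_combination hrec - ih

/-- Theorem 2.4, Eq. (2.5b): a closed formula for `N(S(k₀,…,k_m))`:
`N(S) = 2^(k₀+⋯+k_m+1) - 2^(k₁+⋯+k_m) + 2^(k₂+⋯+k_m) - ⋯ ± 2^(k_m) - c`,
where `c = 2` if `m` is even and `c = 1` if `m` is odd. -/
theorem stmt10 (ks : List ℕ) (hne : ks ≠ [])
    (hpos : ∀ i, 1 ≤ i → i < ks.length → 1 ≤ ks.getD i 0) :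
    (posN (blockStr ks) : ℤ) =
      2 ^ (ks.sum + 1) +
        (∑ i ∈ Finset.Icc 1 (ks.length - 1), (-1 : ℤ) ^ i * 2 ^ (ks.drop i).sum) -
        (if Even (ks.length - 1) then 2 else 1) :=
  stmt10_general ks
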